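/- Buyer-side inequality in expectation: for every nondecreasing c : [0,1] → ℝ, every Borel probability measure ν on ℝ with ∫|v| dν(v) < ∞, and every λ ∈ (0,1), one has (1 − λ)·FB ≤ u_S + u_B · ln(1/λ), where FB := ∫_ℝ ∫₀¹ max(v − c(q), 0) dq dν(v), u_B := ∫_ℝ sup_{p ∈ ℝ} ((v − p)·x(p)) dν(v), and u_S := ∫₀¹ sup_{p ∈ ℝ} ((p − c(q))·ν({v : v ≥ p})) dq. -/

import Mathlib

/-! Fix the buyer's value `v`; the seller quantiles that trade at price `v` are `q < x(v)`.
Split their gains `∫₀^{x(v)} (v - c q)⁺ dq` at `l x(v)`. On `[l x(v), x(v)]` the buyer could offer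
`c q`, so `q (v - c q)⁺ ≤ u_B(v)`, and integrating against `dq / q` gives `log (1/l) u_B(v)`.
On `[0, l x(v)]` substitute `q = l u`: compared with `l` times the total gains this leaves the
crossing term `l ∫₀¹ 1[c u ≤ v] (c u - c (l u)) du`. Averaging over `v` (Fubini) turns it into
`l ∫₀¹ (c u - c (l u)) ν[c u, ∞) du`, and the seller of quantile `l u` could ask `c u`, so after
rescaling this is at most `u_S`. -/

open MeasureTheory Set

/-- The probability that the seller (with cost curve `c` on quantiles in `[0,1]`)
accepts a price `p`: the Lebesgue measure of `{q ∈ [0,1] : c q ≤ p}`. -/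
noncomputable def accProb (c : ℝ → ℝ) (p : ℝ) : ℝ :=
  (volume {q : ℝ | q ∈ Icc (0:ℝ) 1 ∧ c q ≤ p}).toReal

/-- First-best gains from trade, in expectation over the buyer value `v ∼ ν`. -/
noncomputable def FB (c : ℝ → ℝ) (ν : Measure ℝ) : ℝ :=
  ∫ v, (∫ q in (0:ℝ)..1, max (v - c q) 0) ∂ν

/-- The buyer's expected optimal proposer utility. -/
noncomputable def uB (c : ℝ → ℝ) (ν : Measure ℝ) : ℝ :=
  ∫ v, (⨆ p : ℝ, (v - p) * accProb c p) ∂ν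

/-- The seller's expected optimal proposer utility. -/
noncomputable def uS (c : ℝ → ℝ) (ν : Measure ℝ) : ℝ :=
  ∫ q in (0:ℝ)..1, ⨆ p : ℝ, (p - c q) * (ν {v : ℝ | p ≤ v}).toReal


noncomputable def tailProb (ν : Measure ℝ) (p : ℝ) : ℝ :=
  ν.real {v : ℝ | p ≤ v}

noncomputable def buyerUtility (c : ℝ → ℝ) (v : ℝ) : ℝ :=
  ⨆ p : ℝ, (v - p) * accProb c p

noncomputable def sellerUtility (c : ℝ → ℝ) (ν : Measure ℝ) (q : ℝ) : ℝ :=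
  ⨆ p : ℝ, (p - c q) * tailProb ν p

section AcceptanceProbability

variable {c : ℝ → ℝ}

lemma accProb_eq_volume_real (c : ℝ → ℝ) (p : ℝ) :
    accProb c p = volume.real {q : ℝ | q ∈ Icc (0:ℝ) 1 ∧ c q ≤ p} := rfl

lemma accProb_nonneg (c : ℝ → ℝ) (p : ℝ) : 0 ≤ accProb c p := ENNReal.toReal_nonneg

lemma accProb_le_one (c : ℝ → ℝ) (p : ℝ) : accProb c p ≤ 1 := by
  rw [accProb_eq_volume_real]
  calc _ ≤ volume.real (Icc (0:ℝ) 1) := measureReal_mono (fun q hq => hq.1) measure_Icc_lt_top.ne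
    _ = 1 := by simp

lemma le_accProb (hc : Monotone c) {u p : ℝ} (hu : u ∈ Icc (0:ℝ) 1) (h : c u ≤ p) :
    u ≤ accProb c p := by
  have hsub : Icc 0 u ⊆ {q : ℝ | q ∈ Icc (0:ℝ) 1 ∧ c q ≤ p} :=
    fun q hq => ⟨⟨hq.1, hq.2.trans hu.2⟩, (hc hq.2).trans h⟩
  rw [accProb_eq_volume_real]
  calc u = volume.real (Icc 0 u) := by rw [Real.volume_real_Icc_of_le hu.1, sub_zero]
    _ ≤ _ := measureReal_mono hsub
        ((measure_mono fun q hq => hq.1 : _ ≤ volume (Icc (0:ℝ) 1)).trans_lt measure_Icc_lt_top).ne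

lemma accProb_le (hc : Monotone c) {u p : ℝ} (hu : 0 ≤ u) (h : p < c u) : accProb c p ≤ u := by
  rw [accProb_eq_volume_real]
  calc _ ≤ volume.real (Icc 0 u) :=
        measureReal_mono (fun q hq => ⟨hq.1.1, (hc.reflect_lt (hq.2.trans_lt h)).le⟩)
          measure_Icc_lt_top.ne
    _ = u := by rw [Real.volume_real_Icc_of_le hu, sub_zero]

end AcceptanceProbability

section BuyerUtility

variable {c : ℝ → ℝ}

lemma sub_mul_accProb_le (hc : Monotone c) (v p : ℝ) :
    (v - p) * accProb c p ≤ max (v - c 0) 0 := by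
  rcases lt_or_ge p (c 0) with hp | hp
  · rw [le_antisymm (accProb_le hc le_rfl hp) (accProb_nonneg c p), mul_zero]
    exact le_max_right _ _
  rcases le_or_gt p v with hpv | hpv
  · calc (v - p) * accProb c p ≤ v - p :=
          mul_le_of_le_one_right (sub_nonneg.2 hpv) (accProb_le_one c p)
      _ ≤ max (v - c 0) 0 := le_max_of_le_left (by linarith)
  · exact (mul_nonpos_of_nonpos_of_nonneg (by linarith) (accProb_nonneg c p)).trans
      (le_max_right _ _)

lemma bddAbove_sub_mul_accProb (hc : Monotone c) (v : ℝ) :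
    BddAbove (range fun p => (v - p) * accProb c p) :=
  ⟨max (v - c 0) 0, by rintro _ ⟨p, rfl⟩; exact sub_mul_accProb_le hc v p⟩

lemma buyerUtility_le (hc : Monotone c) (v : ℝ) : buyerUtility c v ≤ max (v - c 0) 0 :=
  ciSup_le (sub_mul_accProb_le hc v)

lemma mul_max_sub_le_buyerUtility (hc : Monotone c) (v : ℝ) {q : ℝ} (hq : q ∈ Icc (0:ℝ) 1) :
    q * max (v - c q) 0 ≤ buyerUtility c v := by
  rcases le_total (c q) v with hqv | hvq
  · rw [max_eq_left (sub_nonneg.2 hqv), mul_comm]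
    exact (mul_le_mul_of_nonneg_left (le_accProb hc hq le_rfl) (sub_nonneg.2 hqv)).trans
      (le_ciSup (bddAbove_sub_mul_accProb hc v) (c q))
  · rw [max_eq_right (sub_nonpos.2 hvq), mul_zero]
    simpa [buyerUtility] using le_ciSup (bddAbove_sub_mul_accProb hc v) v

lemma buyerUtility_nonneg (hc : Monotone c) (v : ℝ) : 0 ≤ buyerUtility c v :=
  (mul_nonneg zero_le_one (le_max_right _ _)).trans
    (mul_max_sub_le_buyerUtility hc v (right_mem_Icc.2 zero_le_one))

lemma buyerUtility_mono (hc : Monotone c) : Monotone (buyerUtility c) := fun _ w hvw =>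
  ciSup_le fun p => le_ciSup_of_le (bddAbove_sub_mul_accProb hc w) p <|
    mul_le_mul_of_nonneg_right (by linarith) (accProb_nonneg c p)

lemma integrable_buyerUtility (hc : Monotone c) {ν : Measure ℝ} [IsFiniteMeasure ν]
    (hν : Integrable (fun v : ℝ => v) ν) : Integrable (buyerUtility c) ν := by
  refine (hν.abs.add (integrable_const |c 0|)).mono'
    (buyerUtility_mono hc).measurable.aestronglyMeasurable (ae_of_all _ fun v => ?_)
  rw [Real.norm_eq_abs, abs_of_nonneg (buyerUtility_nonneg hc v)]
  exact (buyerUtility_le hc v).trans <| show _ ≤ |v| + |c 0| from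
    max_le (by linarith [le_abs_self v, neg_abs_le (c 0)]) (by positivity)

end BuyerUtility

lemma tailProb_nonneg (ν : Measure ℝ) (p : ℝ) : 0 ≤ tailProb ν p := measureReal_nonneg

section SellerUtility

variable {ν : Measure ℝ} [IsProbabilityMeasure ν]

lemma sub_mul_tailProb_le (hν : Integrable (fun v : ℝ => v) ν) (s p : ℝ) :
    (p - s) * tailProb ν p ≤ ∫ v, |v| ∂ν + |s| := by
  have habs : Integrable (fun v : ℝ => |v| + |s|) ν := hν.abs.add (integrable_const _)
  rcases le_or_gt p s with hps | hsp
  · have : 0 ≤ ∫ v, |v| ∂ν + |s| := by positivity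
    exact (mul_nonpos_of_nonpos_of_nonneg (by linarith) (tailProb_nonneg ν p)).trans this
  calc (p - s) * tailProb ν p = ∫ _ in Ici p, (p - s) ∂ν := by
        rw [setIntegral_const, smul_eq_mul, mul_comm]; rfl
    _ ≤ ∫ v in Ici p, (|v| + |s|) ∂ν :=
        setIntegral_mono_on (integrableOn_const) habs.integrableOn measurableSet_Ici
          fun v hv => by linarith [le_abs_self v, neg_abs_le s, mem_Ici.1 hv]
    _ ≤ ∫ v, (|v| + |s|) ∂ν := setIntegral_le_integral habs (ae_of_all _ fun v => by positivity)
    _ = ∫ v, |v| ∂ν + |s| := by simp [integral_add hν.abs (integrable_const _)]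

variable {c : ℝ → ℝ}

lemma bddAbove_sub_mul_tailProb (hν : Integrable (fun v : ℝ => v) ν) (q : ℝ) :
    BddAbove (range fun p => (p - c q) * tailProb ν p) :=
  ⟨_, by rintro _ ⟨p, rfl⟩; exact sub_mul_tailProb_le hν (c q) p⟩

lemma le_sellerUtility (hν : Integrable (fun v : ℝ => v) ν) (q p : ℝ) :
    (p - c q) * tailProb ν p ≤ sellerUtility c ν q :=
  le_ciSup (bddAbove_sub_mul_tailProb hν q) p

lemma sellerUtility_nonneg (hν : Integrable (fun v : ℝ => v) ν) (q : ℝ) :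
    0 ≤ sellerUtility c ν q := by
  simpa using le_sellerUtility (c := c) hν q (c q)

lemma sellerUtility_antitone (hν : Integrable (fun v : ℝ => v) ν) (hc : Monotone c) :
    Antitone (sellerUtility c ν) := fun _ _ hqr =>
  ciSup_le fun p => (mul_le_mul_of_nonneg_right (by linarith [hc hqr]) (tailProb_nonneg ν p)).trans
    (le_sellerUtility hν _ p)

end SellerUtility

lemma integral_le_mul_log_div {f : ℝ → ℝ} {a b B : ℝ} (ha : 0 < a) (hab : a ≤ b)
    (hf : IntervalIntegrable f volume a b) (hB : ∀ u ∈ Icc a b, u * f u ≤ B) :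
    ∫ u in a..b, f u ≤ B * Real.log (b / a) := by
  have hpos : ∀ u ∈ Icc a b, 0 < u := fun u hu => ha.trans_le hu.1
  have hinv : IntervalIntegrable (fun u : ℝ => u⁻¹) volume a b :=
    intervalIntegral.intervalIntegrable_inv (fun u hu => (hpos u (uIcc_of_le hab ▸ hu)).ne')
      continuousOn_id
  calc ∫ u in a..b, f u ≤ ∫ u in a..b, B * u⁻¹ :=
        intervalIntegral.integral_mono_on hab hf (hinv.const_mul B) fun u hu => by
          rw [← div_eq_mul_inv, le_div_iff₀ (hpos u hu), mul_comm]
          exact hB u hu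
    _ = B * Real.log (b / a) := by
        rw [intervalIntegral.integral_const_mul, integral_inv_of_pos ha (ha.trans_le hab)]

section CrossingTerm

variable {c : ℝ → ℝ} {l : ℝ}

lemma sub_comp_mul_mem_Icc (hc : Monotone c) (hl : l ∈ Icc (0:ℝ) 1) {u : ℝ}
    (hu : u ∈ Icc (0:ℝ) 1) : c u - c (l * u) ∈ Icc 0 (c 1 - c 0) := by
  have hlu : l * u ≤ u := mul_le_of_le_one_left hu.1 hl.2
  constructor <;> linarith [hc hlu, hc hu.2, hc (mul_nonneg hl.1 hu.1)]

lemma abs_ite_sub_comp_mul_le (hc : Monotone c) (hl : l ∈ Icc (0:ℝ) 1) {u : ℝ}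
    (hu : u ∈ Icc (0:ℝ) 1) (v : ℝ) :
    |if c u ≤ v then c u - c (l * u) else 0| ≤ c 1 - c 0 := by
  obtain ⟨h0, h1⟩ := sub_comp_mul_mem_Icc hc hl hu
  split_ifs
  · rwa [abs_of_nonneg h0]
  · simpa using h0.trans h1

lemma measurable_sub_comp_mul (hc : Monotone c) (l : ℝ) : Measurable fun u => c u - c (l * u) :=
  hc.measurable.sub (hc.measurable.comp (measurable_const_mul l))

lemma intervalIntegrable_ite_sub_comp_mul (hc : Monotone c) (hl : l ∈ Icc (0:ℝ) 1) (v : ℝ) :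
    IntervalIntegrable (fun u => if c u ≤ v then c u - c (l * u) else 0) volume 0 1 := by
  refine (intervalIntegrable_const (c := c 1 - c 0)).mono_fun'
    ((measurable_sub_comp_mul hc l).ite (measurableSet_le hc.measurable measurable_const)
      measurable_const).aestronglyMeasurable ?_
  refine (ae_restrict_iff' measurableSet_uIoc).2 (ae_of_all _ fun u hu => ?_)
  rw [uIoc_of_le zero_le_one] at hu
  exact abs_ite_sub_comp_mul_le hc hl (Ioc_subset_Icc_self hu) v

end CrossingTerm

section Pointwise

variable {c : ℝ → ℝ} {l : ℝ}

lemma integral_zero_one_eq_of_eq_zero {f : ℝ → ℝ} {u₀ : ℝ} (hu₀ : u₀ ∈ Icc (0:ℝ) 1)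
    (hf : IntervalIntegrable f volume 0 1) (hzero : ∀ u ∈ Ioc u₀ 1, f u = 0) :
    ∫ u in (0:ℝ)..1, f u = ∫ u in (0:ℝ)..u₀, f u := by
  rw [← intervalIntegral.integral_add_adjacent_intervals
      (hf.mono_set (uIcc_subset_uIcc_left (by simpa [uIcc_of_le zero_le_one] using hu₀)))
      (hf.mono_set (uIcc_subset_uIcc_right (by simpa [uIcc_of_le zero_le_one] using hu₀))),
    intervalIntegral.integral_zero_ae (ae_of_all _ fun u hu => hzero u (uIoc_of_le hu₀.2 ▸ hu)),
    add_zero]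

lemma one_sub_mul_integral_max_eq (hc : Monotone c) (hl : l ∈ Ioc (0:ℝ) 1) (v : ℝ) :
    (1 - l) * ∫ u in (0:ℝ)..1, max (v - c u) 0 =
      l * (∫ u in (0:ℝ)..1, if c u ≤ v then c u - c (l * u) else 0) +
        ∫ u in l * accProb c v..accProb c v, max (v - c u) 0 := by
  set u₀ := accProb c v
  set M : ℝ → ℝ := fun u => max (v - c u) 0
  have hu₀ : u₀ ∈ Icc 0 1 := ⟨accProb_nonneg c v, accProb_le_one c v⟩
  have hMa : Antitone M := fun s t hst => max_le_max (by linarith [hc hst]) le_rfl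
  have hMi : ∀ a b, IntervalIntegrable M volume a b :=
    fun a b => (hMa.antitoneOn _).intervalIntegrable
  have hMli : IntervalIntegrable (fun u => M (l * u)) volume 0 u₀ :=
    ((hMa.comp_monotone (monotone_id.const_mul hl.1.le)).antitoneOn _).intervalIntegrable
  have hno_trade : ∀ u ∈ Ioc u₀ 1, v < c u := fun u hu =>
    lt_of_not_ge fun h => hu.1.not_ge (le_accProb hc ⟨hu₀.1.trans hu.1.le, hu.2⟩ h)
  have htrade : ∀ u ∈ Ioo 0 u₀, c u ≤ v := fun u hu =>
    le_of_not_gt fun h => hu.2.not_ge (accProb_le hc hu.1.le h)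
  have hJ : ∫ u in (0:ℝ)..1, M u = ∫ u in (0:ℝ)..u₀, M u :=
    integral_zero_one_eq_of_eq_zero hu₀ (hMi 0 1) fun u hu => max_eq_right (by
      linarith [hno_trade u hu])
  have hT : (∫ u in (0:ℝ)..1, if c u ≤ v then c u - c (l * u) else 0) =
      ∫ u in (0:ℝ)..u₀, M (l * u) - M u := by
    rw [integral_zero_one_eq_of_eq_zero hu₀
      (intervalIntegrable_ite_sub_comp_mul hc (Ioc_subset_Icc_self hl) v)
      fun u hu => if_neg (hno_trade u hu).not_ge]
    refine intervalIntegral.integral_congr_Ioo_of_le hu₀.1 fun u hu => ?_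
    have hlu : c (l * u) ≤ c u := hc (mul_le_of_le_one_left hu.1.le hl.2)
    simp only [M, if_pos (htrade u hu), max_eq_left (sub_nonneg.2 (htrade u hu)),
      max_eq_left (sub_nonneg.2 (hlu.trans (htrade u hu)))]
    ring
  have hscale : ∫ u in (0:ℝ)..u₀, M (l * u) = l⁻¹ * ∫ u in (0:ℝ)..l * u₀, M u := by
    rw [intervalIntegral.integral_comp_mul_left M hl.1.ne', mul_zero, smul_eq_mul]
  have hsplit :=
    intervalIntegral.integral_add_adjacent_intervals (hMi 0 (l * u₀)) (hMi (l * u₀) u₀)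
  rw [hJ, hT, intervalIntegral.integral_sub hMli (hMi 0 u₀), hscale, ← hsplit,
    mul_sub, ← mul_assoc, mul_inv_cancel₀ hl.1.ne', one_mul]
  ring

lemma one_sub_mul_integral_max_le (hc : Monotone c) (hl : l ∈ Ioc (0:ℝ) 1) (v : ℝ) :
    (1 - l) * ∫ u in (0:ℝ)..1, max (v - c u) 0 ≤
      l * (∫ u in (0:ℝ)..1, if c u ≤ v then c u - c (l * u) else 0) +
        Real.log (1 / l) * buyerUtility c v := by
  rw [one_sub_mul_integral_max_eq hc hl v]
  gcongr
  have hlog : 0 ≤ Real.log (1 / l) := Real.log_nonneg (one_le_one_div hl.1 hl.2)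
  rcases (accProb_nonneg c v).eq_or_lt with h0 | h0
  · rw [← h0, mul_zero, intervalIntegral.integral_same]
    exact mul_nonneg hlog (buyerUtility_nonneg hc v)
  have hM : Antitone fun u => max (v - c u) 0 := fun s t hst =>
    max_le_max (by linarith [hc hst]) le_rfl
  have hlu₀ : l * accProb c v ≤ accProb c v := mul_le_of_le_one_left h0.le hl.2
  calc _ ≤ buyerUtility c v * Real.log (accProb c v / (l * accProb c v)) :=
        integral_le_mul_log_div (mul_pos hl.1 h0) hlu₀ (hM.antitoneOn _).intervalIntegrable
          fun u hu => mul_max_sub_le_buyerUtility hc v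
            ⟨(mul_pos hl.1 h0).le.trans hu.1, hu.2.trans (accProb_le_one c v)⟩
    _ = Real.log (1 / l) * buyerUtility c v := by
        rw [div_mul_cancel_right₀ h0.ne', one_div, mul_comm]

end Pointwise

section Fubini

variable {c φ : ℝ → ℝ} {ν : Measure ℝ} [IsFiniteMeasure ν]

lemma integrable_uncurry_ite_le (hc : Measurable c) (hφ : Measurable φ) {K : ℝ}
    (hK : ∀ u ∈ Ioc (0:ℝ) 1, |φ u| ≤ K) :
    Integrable (Function.uncurry fun v u => if c u ≤ v then φ u else 0)
      (ν.prod (volume.restrict (Ioc (0:ℝ) 1))) := by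
  have : IsFiniteMeasure (volume.restrict (Ioc (0:ℝ) 1)) :=
    isFiniteMeasure_restrict.2 measure_Ioc_lt_top.ne
  refine (integrable_const K).mono' (Measurable.ite
    (measurableSet_le (hc.comp measurable_snd) measurable_fst) (hφ.comp measurable_snd)
      measurable_const).aestronglyMeasurable ?_
  filter_upwards [Measure.quasiMeasurePreserving_snd.ae (ae_restrict_mem measurableSet_Ioc)]
    with ⟨v, u⟩ hu
  simp only [Function.uncurry_apply_pair, Real.norm_eq_abs]
  split_ifs
  · exact hK u hu
  · simpa using (abs_nonneg _).trans (hK 1 ⟨one_pos, le_rfl⟩)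

lemma integrable_integral_ite_le (hc : Measurable c) (hφ : Measurable φ) {K : ℝ}
    (hK : ∀ u ∈ Ioc (0:ℝ) 1, |φ u| ≤ K) :
    Integrable (fun v => ∫ u in (0:ℝ)..1, if c u ≤ v then φ u else 0) ν := by
  simpa only [intervalIntegral.integral_of_le zero_le_one, Function.uncurry_apply_pair] using
    (integrable_uncurry_ite_le (ν := ν) hc hφ hK).integral_prod_left

lemma integral_integral_ite_le (hc : Measurable c) (hφ : Measurable φ) {K : ℝ}
    (hK : ∀ u ∈ Ioc (0:ℝ) 1, |φ u| ≤ K) :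
    ∫ v, (∫ u in (0:ℝ)..1, if c u ≤ v then φ u else 0) ∂ν =
      ∫ u in (0:ℝ)..1, φ u * tailProb ν (c u) := by
  have hinner (u : ℝ) : ∫ v, (if c u ≤ v then φ u else 0) ∂ν = φ u * tailProb ν (c u) := by
    have hind : (fun v => if c u ≤ v then φ u else 0) = (Ici (c u)).indicator fun _ => φ u := by
      ext v
      simp [indicator_apply]
    rw [hind, integral_indicator_const _ measurableSet_Ici, smul_eq_mul, mul_comm]
    rfl
  simp only [intervalIntegral.integral_of_le zero_le_one]
  rw [integral_integral_swap (integrable_uncurry_ite_le hc hφ hK)]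
  simp only [hinner]

end Fubini

lemma mul_integral_le_integral_sellerUtility {c : ℝ → ℝ} {ν : Measure ℝ}
    [IsProbabilityMeasure ν] (hc : Monotone c) (hν : Integrable (fun v : ℝ => v) ν) {l : ℝ}
    (hl : l ∈ Ioc (0:ℝ) 1) :
    l * ∫ u in (0:ℝ)..1, (c u - c (l * u)) * tailProb ν (c u) ≤
      ∫ q in (0:ℝ)..1, sellerUtility c ν q := by
  set g : ℝ → ℝ := fun u => (c u - c (l * u)) * tailProb ν (c u)
  have hUS (a b : ℝ) : IntervalIntegrable (sellerUtility c ν) volume a b :=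
    ((sellerUtility_antitone hν hc).antitoneOn _).intervalIntegrable
  have hrescale : l * ∫ u in (0:ℝ)..1, g u = ∫ q in (0:ℝ)..l, g (q / l) := by
    rw [intervalIntegral.integral_comp_div g hl.1.ne', zero_div, div_self hl.1.ne', smul_eq_mul]
  -- At quantile `q`, the seller may ask the price `c (q / l)`.
  have hg_le : ∀ q, g (q / l) ≤ sellerUtility c ν q := fun q => by
    simpa only [g, mul_div_cancel₀ q hl.1.ne'] using le_sellerUtility hν q (c (q / l))
  have hg_nonneg : ∀ q ∈ Ioc 0 l, 0 ≤ g (q / l) := fun q hq =>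
    mul_nonneg (sub_comp_mul_mem_Icc hc (Ioc_subset_Icc_self hl)
      ⟨div_nonneg hq.1.le hl.1.le, (div_le_one hl.1).2 hq.2⟩).1 (tailProb_nonneg ν _)
  rw [hrescale]
  calc ∫ q in (0:ℝ)..l, g (q / l) ≤ ∫ q in (0:ℝ)..l, sellerUtility c ν q := by
        rw [intervalIntegral.integral_of_le hl.1.le, intervalIntegral.integral_of_le hl.1.le]
        exact integral_mono_of_nonneg ((ae_restrict_iff' measurableSet_Ioc).2
          (ae_of_all _ hg_nonneg))
          (hUS 0 l).1 (ae_of_all _ hg_le)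
    _ ≤ ∫ q in (0:ℝ)..1, sellerUtility c ν q :=
        intervalIntegral.integral_mono_interval le_rfl hl.1.le hl.2
          (ae_of_all _ (sellerUtility_nonneg hν)) (hUS 0 1)

theorem one_sub_mul_FB_le_of_monotone {c : ℝ → ℝ} (hc : Monotone c) (ν : Measure ℝ)
    [IsProbabilityMeasure ν] (hν : Integrable (fun v : ℝ => v) ν) {l : ℝ} (hl : l ∈ Ioc (0:ℝ) 1) :
    (1 - l) * FB c ν ≤ uS c ν + uB c ν * Real.log (1 / l) := by
  have hK : ∀ u ∈ Ioc (0:ℝ) 1, |c u - c (l * u)| ≤ c 1 - c 0 := fun u hu => by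
    obtain ⟨h0, h1⟩ := sub_comp_mul_mem_Icc hc (Ioc_subset_Icc_self hl) (Ioc_subset_Icc_self hu)
    rwa [abs_of_nonneg h0]
  have hcross :=
    integrable_integral_ite_le (ν := ν) hc.measurable (measurable_sub_comp_mul hc l) hK
  have hint : Integrable (fun v =>
      l * (∫ u in (0:ℝ)..1, if c u ≤ v then c u - c (l * u) else 0) +
        Real.log (1 / l) * buyerUtility c v) ν :=
    (hcross.const_mul l).add ((integrable_buyerUtility hc hν).const_mul _)
  calc (1 - l) * FB c ν = ∫ v, (1 - l) * (∫ u in (0:ℝ)..1, max (v - c u) 0) ∂ν := by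
        rw [FB, integral_const_mul]
    _ ≤ ∫ v, (l * (∫ u in (0:ℝ)..1, if c u ≤ v then c u - c (l * u) else 0) +
          Real.log (1 / l) * buyerUtility c v) ∂ν :=
        integral_mono_of_nonneg (ae_of_all _ fun v => mul_nonneg (sub_nonneg.2 hl.2)
            (intervalIntegral.integral_nonneg zero_le_one fun _ _ => le_max_right _ _))
          hint (ae_of_all _ (one_sub_mul_integral_max_le hc hl))
    _ = l * (∫ u in (0:ℝ)..1, (c u - c (l * u)) * tailProb ν (c u)) +
          Real.log (1 / l) * uB c ν := by
        rw [integral_add (hcross.const_mul l) ((integrable_buyerUtility hc hν).const_mul _),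
          integral_const_mul, integral_const_mul,
          integral_integral_ite_le hc.measurable (measurable_sub_comp_mul hc l) hK]
        rfl
    _ ≤ uS c ν + uB c ν * Real.log (1 / l) := by
        rw [mul_comm (Real.log _)]
        exact add_le_add (mul_integral_le_integral_sellerUtility hc hν hl) le_rfl

section CongrOnUnitInterval

variable {c C : ℝ → ℝ}

lemma accProb_congr (h : EqOn c C (Icc 0 1)) : accProb c = accProb C := by
  ext p
  unfold accProb
  congr 3
  ext q
  exact and_congr_right fun hq => by rw [h hq]

lemma FB_congr (h : EqOn c C (Icc 0 1)) (ν : Measure ℝ) : FB c ν = FB C ν := by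
  unfold FB
  congr 1
  ext v
  exact intervalIntegral.integral_congr fun q hq => by
    rw [uIcc_of_le zero_le_one] at hq
    simp only [h hq]

lemma uB_congr (h : EqOn c C (Icc 0 1)) (ν : Measure ℝ) : uB c ν = uB C ν := by
  rw [uB, uB, accProb_congr h]

lemma uS_congr (h : EqOn c C (Icc 0 1)) (ν : Measure ℝ) : uS c ν = uS C ν :=
  intervalIntegral.integral_congr fun q hq => by
    rw [uIcc_of_le zero_le_one] at hq
    simp only [h hq]

end CongrOnUnitInterval

theorem stmt6 (c : ℝ → ℝ) (hc : MonotoneOn c (Icc (0:ℝ) 1))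
    (ν : Measure ℝ) [IsProbabilityMeasure ν]
    (hν : Integrable (fun v : ℝ => v) ν)
    (l : ℝ) (hl : l ∈ Ioo (0:ℝ) 1) :
    (1 - l) * FB c ν ≤ uS c ν + uB c ν * Real.log (1 / l) := by
  have hC : Monotone (IccExtend zero_le_one fun q : Icc (0:ℝ) 1 => c q) :=
    (monotoneOn_iff_monotone.1 hc).IccExtend zero_le_one
  have hcC : EqOn c (IccExtend zero_le_one fun q : Icc (0:ℝ) 1 => c q) (Icc 0 1) :=
    fun q hq => by rw [IccExtend_of_mem _ _ hq]
  rw [FB_congr hcC ν, uS_congr hcC ν, uB_congr hcC ν]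
  exact one_sub_mul_FB_le_of_monotone hC ν hν (Ioo_subset_Ioc_self hl)
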